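/- For every n ≥ 1 there exists a constant C_n > 0, depending only on n, with the following property: for every N ≥ 1 and every symmetric n-multilinear map A : (ℝ^N)^n → ℝ, one has Σ_{i_1=1}^N ⋯ Σ_{i_n=1}^N A(e_{i_1}, …, e_{i_n})² ≤ C_n ∫_{ℝ^N} A(ξ, ξ, …, ξ)² dγ_N(ξ), where γ_N denotes the standard Gaussian measure on ℝ^N (the N-fold product of the standard normal distribution on ℝ) and e_1, …, e_N is the standard orthonormal basis of ℝ^N. -/

import Mathlib

/-!
Write `a u = A(e_{u 1}, …, e_{u n})` and let `α u i` be the number of `j` with `u j = i`. Then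
`F ξ = A(ξ, …, ξ) = ∑ u, a u * ∏ i, ξ i ^ α u i`; replacing each monomial `ξ i ^ k` by the Hermite
polynomial `H_k (ξ i)` gives `T`. Gaussian integration by parts, iterated along
`H_{k+1} = X H_k - H_k'`, gives `E[q H_k] = E[q^{(k)}]`, so `E[X^m H_k] = E[H_m H_k] = δ_{mk} k!`
for `m ≤ k`. Since every `α u` has total degree `n`, this yields `⟨F, T⟩ = ‖T‖²` in `L²(γ_N)`, so
`‖T‖² ≤ ‖F‖²`. By symmetry `a u` only depends on `α u`, so
`‖T‖² = ∑_{α u = α v} a u a v α u! = ∑_{α u = α v} a u ^ 2 α u! ≥ ∑ u, a u ^ 2`; hence `C_n = 1`.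
-/

open MeasureTheory ProbabilityTheory Polynomial Real Finset
open scoped NNReal Nat

namespace MultilinearMap

variable {R M : Type*} [CommSemiring R] [AddCommMonoid M] [Module R M]

lemma apply_const_eq_sum {ι β : Type*} [Fintype ι] [DecidableEq ι] [Fintype β] [DecidableEq β]
    (A : MultilinearMap R (fun _ : ι => β → R) M) (ξ : β → R) :
    A (fun _ => ξ) = ∑ u : ι → β, (∏ j, ξ (u j)) • A (fun j => Pi.single (u j) 1) := by
  calc A (fun _ => ξ) = A (fun _ => ∑ b, ξ b • Pi.single b 1) := by rw [← pi_eq_sum_univ' ξ]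
    _ = ∑ u : ι → β, A (fun j => ξ (u j) • Pi.single (u j) 1) := A.map_sum _
    _ = _ := sum_congr rfl fun u _ => A.map_smul_univ _ _

end MultilinearMap

namespace GaussianChaos

section FiberCard

variable {α β : Type*} [Fintype α] [DecidableEq β]

def fiberCard (u : α → β) (b : β) : ℕ := #{a | u a = b}

lemma sum_fiberCard [Fintype β] (u : α → β) : ∑ b, fiberCard u b = Fintype.card α := by
  simp [fiberCard, ← card_eq_sum_card_fiberwise (fun a _ => mem_univ (u a))]

lemma prod_comp_eq_prod_pow_fiberCard [Fintype β] {M : Type*} [CommMonoid M] (u : α → β)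
    (f : β → M) : ∏ a, f (u a) = ∏ b, f b ^ fiberCard u b := by
  simp [← prod_fiberwise' univ u f, fiberCard]

lemma exists_perm_comp_eq_of_fiberCard_eq {u u' : α → β} (h : fiberCard u = fiberCard u') :
    ∃ σ : Equiv.Perm α, u' ∘ σ = u := by
  have hcard : ∀ b, Fintype.card {a // u a = b} = Fintype.card {a // u' a = b} := fun b => by
    simpa [Fintype.card_subtype, fiberCard] using congrFun h b
  let e : ∀ b, {a // u a = b} ≃ {a // u' a = b} := fun b => Fintype.equivOfCardEq (hcard b)
  exact ⟨(Equiv.sigmaFiberEquiv u).symm.trans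
    ((Equiv.sigmaCongrRight e).trans (Equiv.sigmaFiberEquiv u')), funext fun a => (e _ _).2⟩

lemma apply_comp_eq_of_fiberCard_eq {γ δ : Type*} (F : (α → γ) → δ)
    (hF : ∀ (σ : Equiv.Perm α) (v : α → γ), F (v ∘ σ) = F v) (e : β → γ) {u u' : α → β}
    (h : fiberCard u = fiberCard u') : F (e ∘ u) = F (e ∘ u') := by
  obtain ⟨σ, rfl⟩ := exists_perm_comp_eq_of_fiberCard_eq h
  exact hF σ (e ∘ u')

end FiberCard

lemma integral_mul_self_le_of_integral_mul_eq {Ω : Type*} [MeasurableSpace Ω] {μ : Measure Ω}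
    {f g : Ω → ℝ} (hff : Integrable (fun x => f x * f x) μ)
    (hfg : Integrable (fun x => f x * g x) μ) (hgg : Integrable (fun x => g x * g x) μ)
    (h : ∫ x, f x * g x ∂μ = ∫ x, g x * g x ∂μ) :
    ∫ x, g x * g x ∂μ ≤ ∫ x, f x * f x ∂μ := by
  have hsq : ∫ x, (f x - g x) ^ 2 ∂μ
      = ∫ x, f x * f x ∂μ - 2 * ∫ x, f x * g x ∂μ + ∫ x, g x * g x ∂μ := by
    have hff_sub : Integrable (fun x => f x * f x - 2 * (f x * g x)) μ := hff.sub (hfg.const_mul 2)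
    rw [← integral_const_mul, ← integral_sub hff (hfg.const_mul 2), ← integral_add hff_sub hgg]
    exact integral_congr_ae (ae_of_all _ fun x => by ring)
  have := integral_nonneg (μ := μ) (f := fun x => (f x - g x) ^ 2) fun x => sq_nonneg _
  linarith

lemma integrable_pow_gaussianReal (μ : ℝ) (v : ℝ≥0) (m : ℕ) :
    Integrable (fun x : ℝ => x ^ m) (gaussianReal μ v) :=
  (memLp_id_gaussianReal (m : ℝ≥0)).integrable_norm_pow' |>.mono' (by fun_prop)
    (ae_of_all _ fun x => by simp [norm_pow])

lemma integrable_eval_gaussianReal (μ : ℝ) (v : ℝ≥0) (p : ℝ[X]) :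
    Integrable (fun x => p.eval x) (gaussianReal μ v) := by
  simp_rw [eval_eq_sum_range]
  exact integrable_finsetSum _ fun i _ => (integrable_pow_gaussianReal μ v i).const_mul _

lemma integrable_gaussianReal_iff {μ : ℝ} {v : ℝ≥0} (hv : v ≠ 0) {f : ℝ → ℝ} :
    Integrable f (gaussianReal μ v) ↔ Integrable (fun x => gaussianPDFReal μ v x * f x) := by
  rw [gaussianReal_of_var_ne_zero _ hv, integrable_withDensity_iff_integrable_smul'
    (measurable_gaussianPDF μ v) (ae_of_all _ fun _ => gaussianPDF_lt_top)]
  simp [toReal_gaussianPDF]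

lemma hasDerivAt_gaussianPDFReal (μ : ℝ) (v : ℝ≥0) (x : ℝ) :
    HasDerivAt (gaussianPDFReal μ v) (-((x - μ) / v) * gaussianPDFReal μ v x) x := by
  have h : HasDerivAt (fun y => -(y - μ) ^ 2 / (2 * v)) (-((x - μ) / v)) x := by
    refine ((((hasDerivAt_id x).sub_const μ).pow 2).neg.div_const (2 * (v : ℝ))).congr_deriv ?_
    simp only [id, Nat.cast_ofNat]
    ring
  refine (h.exp.const_mul (√(2 * π * v))⁻¹).congr_deriv ?_
  simp only [gaussianPDFReal]
  ring

theorem integral_sub_mul_eval_gaussianReal {μ : ℝ} {v : ℝ≥0} (hv : v ≠ 0) (p : ℝ[X]) :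
    ∫ x, (x - μ) * p.eval x ∂gaussianReal μ v
      = v * ∫ x, (derivative p).eval x ∂gaussianReal μ v := by
  have hint : ∀ q : ℝ[X], Integrable (fun x => gaussianPDFReal μ v x * q.eval x) := fun q =>
    (integrable_gaussianReal_iff hv).1 (integrable_eval_gaussianReal μ v q)
  have hderiv : ∀ x, HasDerivAt (fun y => gaussianPDFReal μ v y * p.eval y)
      (gaussianPDFReal μ v x * (derivative p).eval x
        - (v : ℝ)⁻¹ * (gaussianPDFReal μ v x * ((X - C μ) * p).eval x)) x := by
    intro x
    refine ((hasDerivAt_gaussianPDFReal μ v x).mul (p.hasDerivAt x)).congr_deriv ?_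
    simp only [eval_mul, eval_sub, eval_X, eval_C]
    ring
  have := integral_eq_zero_of_hasDerivAt_of_integrable hderiv
    ((hint _).sub ((hint _).const_mul _)) (hint p)
  rw [integral_sub (hint _) ((hint _).const_mul _), integral_const_mul, sub_eq_zero] at this
  rw [integral_gaussianReal_eq_integral_smul hv, integral_gaussianReal_eq_integral_smul hv]
  simp only [eval_mul, eval_sub, eval_X, eval_C, smul_eq_mul] at this ⊢
  rw [this, ← mul_assoc, mul_inv_cancel₀ (by exact_mod_cast hv), one_mul]

noncomputable def gaussianExpectation (μ : ℝ) (v : ℝ≥0) : ℝ[X] →ₗ[ℝ] ℝ where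
  toFun p := ∫ x, p.eval x ∂gaussianReal μ v
  map_add' p q := by
    simp only [eval_add]
    exact integral_add (integrable_eval_gaussianReal μ v p) (integrable_eval_gaussianReal μ v q)
  map_smul' c p := by simp [integral_const_mul]

lemma gaussianExpectation_apply (μ : ℝ) (v : ℝ≥0) (p : ℝ[X]) :
    gaussianExpectation μ v p = ∫ x, p.eval x ∂gaussianReal μ v := rfl

@[simp]
lemma gaussianExpectation_C (μ : ℝ) (v : ℝ≥0) (c : ℝ) : gaussianExpectation μ v (C c) = c := by
  simp [gaussianExpectation_apply]

theorem gaussianExpectation_X_sub_C_mul {μ : ℝ} {v : ℝ≥0} (hv : v ≠ 0) (p : ℝ[X]) :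
    gaussianExpectation μ v ((X - C μ) * p) = v * gaussianExpectation μ v (derivative p) := by
  simpa [gaussianExpectation_apply] using integral_sub_mul_eval_gaussianReal hv p

noncomputable def hermiteReal (k : ℕ) : ℝ[X] := (hermite k).map (Int.castRingHom ℝ)

lemma hermiteReal_succ (k : ℕ) :
    hermiteReal (k + 1) = X * hermiteReal k - derivative (hermiteReal k) := by
  simp [hermiteReal, hermite_succ, derivative_map]

lemma monic_hermiteReal (k : ℕ) : (hermiteReal k).Monic :=
  (hermite_monic k).map _

lemma natDegree_hermiteReal (k : ℕ) : (hermiteReal k).natDegree = k := by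
  rw [hermiteReal, (hermite_monic k).natDegree_map, natDegree_hermite]

theorem gaussianExpectation_mul_hermiteReal (p : ℝ[X]) (k : ℕ) :
    gaussianExpectation 0 1 (p * hermiteReal k) = gaussianExpectation 0 1 (derivative^[k] p) := by
  induction k generalizing p with
  | zero => simp [hermiteReal]
  | succ k ih =>
    have hibp := gaussianExpectation_X_sub_C_mul (μ := 0) one_ne_zero (p * hermiteReal k)
    simp only [map_zero, sub_zero, NNReal.coe_one, one_mul, derivative_mul, map_add] at hibp
    rw [Function.iterate_succ_apply, ← ih, hermiteReal_succ, mul_sub, map_sub,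
      mul_left_comm, hibp]
    abel

theorem gaussianExpectation_mul_hermiteReal_of_natDegree_le {p : ℝ[X]} {k : ℕ}
    (hp : p.natDegree ≤ k) :
    gaussianExpectation 0 1 (p * hermiteReal k) = k ! * p.coeff k := by
  have hdeg : (derivative^[k] p).natDegree = 0 :=
    Nat.eq_zero_of_le_zero ((natDegree_iterate_derivative p k).trans (by omega))
  rw [gaussianExpectation_mul_hermiteReal, eq_C_of_natDegree_eq_zero hdeg,
    coeff_iterate_derivative, gaussianExpectation_C]
  simp [Nat.descFactorial_self]

theorem gaussianExpectation_monic_mul_hermiteReal {q : ℝ[X]} {m k : ℕ} (hq : q.Monic)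
    (hdeg : q.natDegree = m) (hmk : m ≤ k) :
    gaussianExpectation 0 1 (q * hermiteReal k) = if m = k then (k ! : ℝ) else 0 := by
  rw [gaussianExpectation_mul_hermiteReal_of_natDegree_le (hdeg ▸ hmk)]
  split_ifs with h
  · subst h; rw [← hdeg, hq.coeff_natDegree, mul_one]
  · rw [coeff_eq_zero_of_natDegree_lt (by omega), mul_zero]

section Product

variable {ι κ : Type*} [Fintype ι] [Fintype κ]

lemma integrable_prod_eval_pi_gaussianReal (μ : ℝ) (v : ℝ≥0) (q : ι → ℝ[X]) :
    Integrable (fun ξ : ι → ℝ => ∏ i, (q i).eval (ξ i))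
      (Measure.pi fun _ => gaussianReal μ v) :=
  Integrable.fintype_prod fun i => integrable_eval_gaussianReal μ v (q i)

lemma integral_prod_eval_pi_gaussianReal (μ : ℝ) (v : ℝ≥0) (q : ι → ℝ[X]) :
    ∫ ξ, ∏ i, (q i).eval (ξ i) ∂(Measure.pi fun _ => gaussianReal μ v)
      = ∏ i, gaussianExpectation μ v (q i) :=
  integral_fintype_prod_eq_prod (fun i x => (q i).eval x)

/-- With `p = (X ^ ·)` this is the expansion `F` of `A(ξ, …, ξ)` above; with `p = hermiteReal`,
its Hermite counterpart `T`. -/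
noncomputable def productExpansion (c : κ → ℝ) (α : κ → ι → ℕ) (p : ℕ → ℝ[X])
    (ξ : ι → ℝ) : ℝ :=
  ∑ s, c s * ∏ i, (p (α s i)).eval (ξ i)

variable (c c' : κ → ℝ) (α β : κ → ι → ℕ) (p q : ℕ → ℝ[X])

lemma productExpansion_mul_productExpansion (ξ : ι → ℝ) :
    productExpansion c α p ξ * productExpansion c' β q ξ
      = ∑ s, ∑ t, c s * c' t * ∏ i, (p (α s i) * q (β t i)).eval (ξ i) := by
  simp only [productExpansion, sum_mul_sum, eval_mul, prod_mul_distrib]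
  refine sum_congr rfl fun s _ => sum_congr rfl fun t _ => by ring

lemma integrable_productExpansion_mul (μ : ℝ) (v : ℝ≥0) :
    Integrable (fun ξ => productExpansion c α p ξ * productExpansion c' β q ξ)
      (Measure.pi fun _ : ι => gaussianReal μ v) := by
  simp only [productExpansion_mul_productExpansion]
  exact integrable_finsetSum _ fun s _ => integrable_finsetSum _ fun t _ =>
    (integrable_prod_eval_pi_gaussianReal μ v _).const_mul _

lemma integral_productExpansion_mul (μ : ℝ) (v : ℝ≥0) :
    ∫ ξ, productExpansion c α p ξ * productExpansion c' β q ξ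
        ∂(Measure.pi fun _ : ι => gaussianReal μ v)
      = ∑ s, ∑ t, c s * c' t * ∏ i, gaussianExpectation μ v (p (α s i) * q (β t i)) := by
  simp only [productExpansion_mul_productExpansion]
  rw [integral_finsetSum _ fun s _ => integrable_finsetSum _ fun t _ =>
    (integrable_prod_eval_pi_gaussianReal μ v _).const_mul _]
  refine sum_congr rfl fun s _ => ?_
  rw [integral_finsetSum _ fun t _ => (integrable_prod_eval_pi_gaussianReal μ v _).const_mul _]
  refine sum_congr rfl fun t _ => ?_
  rw [integral_const_mul, integral_prod_eval_pi_gaussianReal]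

noncomputable def hermiteQuadForm : ℝ :=
  ∑ s, ∑ t, c s * c t * if α s = α t then ∏ i, ((α s i)! : ℝ) else 0

lemma exists_lt_of_sum_eq_of_ne {f g : ι → ℕ} (hsum : ∑ i, f i = ∑ i, g i) (hne : f ≠ g) :
    ∃ i, f i < g i := by
  by_contra! hle
  exact hne (funext fun i =>
    ((sum_eq_sum_iff_of_le fun i _ => hle i).1 hsum.symm i (mem_univ i)).symm)

theorem integral_productExpansion_mul_hermiteReal {d : ℕ} (hα : ∀ s, ∑ i, α s i = d)
    (hp : ∀ m, (p m).Monic) (hpdeg : ∀ m, (p m).natDegree = m) :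
    ∫ ξ, productExpansion c α p ξ * productExpansion c α hermiteReal ξ
        ∂(Measure.pi fun _ : ι => gaussianReal 0 1)
      = hermiteQuadForm c α := by
  rw [integral_productExpansion_mul, hermiteQuadForm]
  refine sum_congr rfl fun s _ => sum_congr rfl fun t _ => ?_
  split_ifs with h
  · refine congrArg _ (prod_congr rfl fun i _ => ?_)
    rw [h, gaussianExpectation_monic_mul_hermiteReal (hp _) (hpdeg _) le_rfl, if_pos rfl]
  · obtain ⟨i, hi⟩ := exists_lt_of_sum_eq_of_ne ((hα s).trans (hα t).symm) h
    rw [prod_eq_zero (mem_univ i), mul_zero]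
    rw [gaussianExpectation_monic_mul_hermiteReal (hp _) (hpdeg _) hi.le, if_neg hi.ne]

theorem sum_sq_le_hermiteQuadForm (hc : ∀ s t, α s = α t → c s = c t) :
    ∑ s, c s ^ 2 ≤ hermiteQuadForm c α := by
  have hterm : ∀ s t, 0 ≤ c s * c t * if α s = α t then ∏ i, ((α s i)! : ℝ) else 0 := by
    intro s t
    split_ifs with h
    · rw [hc s t h]; exact mul_nonneg (mul_self_nonneg _) (by positivity)
    · rw [mul_zero]
  refine sum_le_sum fun s _ => ?_
  refine le_trans ?_ (single_le_sum (fun t _ => hterm s t) (mem_univ s))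
  rw [if_pos rfl, ← sq]
  exact le_mul_of_one_le_right (sq_nonneg _)
    (one_le_prod fun i _ => Nat.one_le_cast.2 (α s i).factorial_pos)

end Product

end GaussianChaos

open GaussianChaos

theorem stmt15_general (n : ℕ) :
    ∃ C : ℝ, 0 < C ∧ ∀ N : ℕ, 1 ≤ N →
      ∀ A : MultilinearMap ℝ (fun _ : Fin n => (Fin N → ℝ)) ℝ,
        (∀ (e : Equiv.Perm (Fin n)) (v : Fin n → (Fin N → ℝ)), A (v ∘ e) = A v) →
        ∑ idx : Fin n → Fin N, (A fun j => Pi.single (idx j) 1) ^ 2 ≤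
          C * ∫ ξ, (A fun _ => ξ) ^ 2 ∂(Measure.pi fun _ : Fin N => gaussianReal 0 1) := by
  refine ⟨1, one_pos, fun N _ A hsym => ?_⟩
  set a : (Fin n → Fin N) → ℝ := fun u => A fun j => Pi.single (u j) 1
  set F := productExpansion a fiberCard (X ^ ·)
  have hdeg (u : Fin n → Fin N) : ∑ i, fiberCard u i = n := by
    rw [sum_fiberCard, Fintype.card_fin]
  have hF (ξ : Fin N → ℝ) : A (fun _ => ξ) = F ξ := by
    rw [A.apply_const_eq_sum]
    refine sum_congr rfl fun u _ => ?_
    simp only [a, smul_eq_mul, prod_comp_eq_prod_pow_fiberCard u ξ, eval_pow, eval_X, mul_comm]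
  have hFH := integral_productExpansion_mul_hermiteReal a fiberCard (X ^ ·) hdeg
    monic_X_pow natDegree_X_pow
  have hHH := integral_productExpansion_mul_hermiteReal a fiberCard hermiteReal hdeg
    monic_hermiteReal natDegree_hermiteReal
  calc ∑ u, a u ^ 2 ≤ hermiteQuadForm a fiberCard :=
        sum_sq_le_hermiteQuadForm a _ fun u u' =>
          apply_comp_eq_of_fiberCard_eq A hsym (fun i => Pi.single i 1)
    _ ≤ ∫ ξ, F ξ * F ξ ∂(Measure.pi fun _ : Fin N => gaussianReal 0 1) := hHH ▸
        integral_mul_self_le_of_integral_mul_eq (integrable_productExpansion_mul ..)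
          (integrable_productExpansion_mul ..) (integrable_productExpansion_mul ..)
          (hFH.trans hHH.symm)
    _ = 1 * ∫ ξ, (A fun _ => ξ) ^ 2 ∂(Measure.pi fun _ : Fin N => gaussianReal 0 1) := by
      simp only [hF, sq, one_mul]

/-- Equivalence of norms on a fixed Wiener chaos, finite-dimensional form: the
squared Hilbert–Schmidt norm of a symmetric `n`-multilinear map on `ℝ^N` is
bounded, with a constant depending only on `n`, by the second Gaussian moment of
the associated degree-`n` homogeneous polynomial. -/
theorem stmt15 (n : ℕ) (hn : 1 ≤ n) :
    ∃ C : ℝ, 0 < C ∧ ∀ N : ℕ, 1 ≤ N →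
      ∀ A : MultilinearMap ℝ (fun _ : Fin n => (Fin N → ℝ)) ℝ,
        (∀ (e : Equiv.Perm (Fin n)) (v : Fin n → (Fin N → ℝ)), A (v ∘ e) = A v) →
        ∑ idx : Fin n → Fin N, (A fun j => Pi.single (idx j) 1) ^ 2 ≤
          C * ∫ ξ, (A fun _ => ξ) ^ 2 ∂(Measure.pi fun _ : Fin N => gaussianReal 0 1) :=
  stmt15_general n
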